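/- In a uniform signal tree with infoset partitions satisfying perfect recall, any two PAOI-equivalent infosets of the same phase have equal win rate: for all r and all ψ, ψ' ∈ Ψ_r, if ψ and ψ' are PAOI-equivalent then w(ψ) = w(ψ'). (Abstract core of Proposition 1: every infoset in a given PAOI class has the same expected showdown equity, so PAOI is a resolution bound of the EHS hand abstraction algorithm.) -/

import Mathlib

open scoped Classical

/-- Win rate of a set `ψ` of phase-`r` signals: the weighted average of the win
indicator `W` over the final-phase (phase-`Γ`) descendants of `ψ`, where the
phase-`r` ancestor of a final-phase signal is obtained by iterating the parent
map `Γ - r` times. -/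
noncomputable def winRate {V : Type*} [Fintype V]
    (phase : V → ℕ) (parent : V → V) (π W : V → ℝ) (Γ r : ℕ) (ψ : Finset V) : ℝ :=
  (∑ z ∈ Finset.univ.filter (fun z => phase z = Γ ∧ parent^[Γ - r] z ∈ ψ), π z * W z) /
    (∑ z ∈ Finset.univ.filter (fun z => phase z = Γ ∧ parent^[Γ - r] z ∈ ψ), π z)

/-- The normalized weight, among the phase-`(r+1)` children of the phase-`r` set
`ψ`, of those children lying in `T`. -/
noncomputable def childFrac {V : Type*} [Fintype V]
    (phase : V → ℕ) (parent : V → V) (π : V → ℝ) (r : ℕ) (ψ T : Finset V) : ℝ :=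
  (∑ θ' ∈ Finset.univ.filter (fun θ' => phase θ' = r + 1 ∧ parent θ' ∈ ψ ∧ θ' ∈ T), π θ') /
    (∑ θ' ∈ Finset.univ.filter (fun θ' => phase θ' = r + 1 ∧ parent θ' ∈ ψ), π θ')

/-- PAOI equivalence, by downward recursion on the phase (fuel `k` corresponds to
phase `Γ - k`).  At the final phase (`k = 0`) two infosets are equivalent iff they
have the same win rate; at an earlier phase `r = Γ - (k+1)` they are equivalent
iff they have the same potential-aware outcome feature, i.e. for every phase-`(r+1)`
infoset `ψ₀`, the normalized weight of their children lying in an infoset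
PAOI-equivalent to `ψ₀` coincide. -/
noncomputable def paoiAux {V : Type*} [Fintype V]
    (phase : V → ℕ) (parent : V → V) (π W : V → ℝ) (Γ : ℕ)
    (Ψ : ℕ → Finset (Finset V)) : ℕ → Finset V → Finset V → Prop
  | 0, ψ, ψ' => winRate phase parent π W Γ Γ ψ = winRate phase parent π W Γ Γ ψ'
  | k + 1, ψ, ψ' =>
      ∀ ψ₀ ∈ Ψ (Γ - k),
        childFrac phase parent π (Γ - (k + 1)) ψ
            (Finset.univ.filter (fun θ' =>
              ∃ ψ₁ ∈ Ψ (Γ - k), θ' ∈ ψ₁ ∧ paoiAux phase parent π W Γ Ψ k ψ₁ ψ₀)) =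
          childFrac phase parent π (Γ - (k + 1)) ψ'
            (Finset.univ.filter (fun θ' =>
              ∃ ψ₁ ∈ Ψ (Γ - k), θ' ∈ ψ₁ ∧ paoiAux phase parent π W Γ Ψ k ψ₁ ψ₀))

set_option linter.unusedSectionVars false

section Helpers
variable {V : Type*} [Fintype V]

lemma phase_iter (phase : V → ℕ) (parent : V → V)
    (hparent : ∀ v, 2 ≤ phase v → phase (parent v) + 1 = phase v) :
    ∀ m (z : V), m + 1 ≤ phase z → phase (parent^[m] z) + m = phase z := by
  intro m
  induction m with
  | zero => intro z _; simp
  | succ m ih =>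
    intro z hz
    have h1 : phase (parent^[m] z) + m = phase z := ih z (by omega)
    have h2 : 2 ≤ phase (parent^[m] z) := by omega
    rw [Function.iterate_succ_apply']
    have := hparent _ h2
    omega

lemma pi_pos (Γ : ℕ) (phase : V → ℕ) (parent : V → V) (M : ℕ → ℕ) (hM : ∀ r, 1 ≤ M r)
    (hphase : ∀ v, 1 ≤ phase v ∧ phase v ≤ Γ)
    (hparent : ∀ v, 2 ≤ phase v → phase (parent v) + 1 = phase v)
    (π : V → ℝ) (hπ1 : ∀ v, phase v = 1 → 0 < π v)
    (hπrec : ∀ v, 2 ≤ phase v → π v = π (parent v) / (M (phase v) : ℝ)) :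
    ∀ v, 0 < π v := by
  have key : ∀ n (v : V), phase v ≤ n → 0 < π v := by
    intro n
    induction n with
    | zero => intro v hv; exact absurd (hphase v).1 (by omega)
    | succ n ih =>
      intro v hv
      rcases eq_or_lt_of_le (hphase v).1 with h1 | h2
      · exact hπ1 v h1.symm
      · have h2' : 2 ≤ phase v := h2
        rw [hπrec v h2']
        have := hparent v h2'
        exact div_pos (ih _ (by omega)) (by exact_mod_cast hM _)
  exact fun v => key (phase v) v le_rfl

lemma sum_fiber (P : V → Prop) (g : V → V) (S : Finset V) (f : V → ℝ) :
    ∑ z ∈ Finset.univ.filter (fun z => P z ∧ g z ∈ S), f z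
      = ∑ θ ∈ S, ∑ z ∈ Finset.univ.filter (fun z => P z ∧ g z = θ), f z := by
  rw [← Finset.sum_fiberwise_of_maps_to (g := g) (t := S)
    (fun z hz => (Finset.mem_filter.mp hz).2.2) f]
  apply Finset.sum_congr rfl
  intro θ hθ
  congr 1
  ext z
  simp only [Finset.mem_filter, Finset.mem_univ, true_and]
  constructor
  · rintro ⟨⟨hp, _⟩, h2⟩; exact ⟨hp, h2⟩
  · rintro ⟨hp, h2⟩; exact ⟨⟨hp, h2 ▸ hθ⟩, h2⟩

lemma desc_weight (Γ : ℕ) (phase : V → ℕ) (parent : V → V) (M : ℕ → ℕ)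
    (hM : ∀ r, 1 ≤ M r)
    (hphase : ∀ v, 1 ≤ phase v ∧ phase v ≤ Γ)
    (hparent : ∀ v, 2 ≤ phase v → phase (parent v) + 1 = phase v)
    (hfiber : ∀ v, phase v < Γ →
      (Finset.univ.filter (fun v' => parent v' = v ∧ phase v' = phase v + 1)).card
        = M (phase v + 1))
    (π : V → ℝ)
    (hπrec : ∀ v, 2 ≤ phase v → π v = π (parent v) / (M (phase v) : ℝ)) :
    ∀ m (θ : V), phase θ + m ≤ Γ →
      ∑ z ∈ Finset.univ.filter (fun z => phase z = phase θ + m ∧ parent^[m] z = θ), π z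
        = π θ := by
  intro m
  induction m with
  | zero =>
    intro θ _
    have hs : Finset.univ.filter (fun z => phase z = phase θ + 0 ∧ parent^[0] z = θ) = {θ} := by
      ext z
      rw [Finset.mem_filter, Finset.mem_singleton]
      simp only [Finset.mem_filter, Finset.mem_univ, true_and, Function.iterate_zero, id_eq,
        Finset.mem_singleton, Nat.add_zero]
      constructor
      · exact fun h => h.2
      · rintro rfl; exact ⟨rfl, rfl⟩
    rw [hs, Finset.sum_singleton]
  | succ m ih =>
    intro θ hθ
    have hmaps : ∀ z ∈ Finset.univ.filter
        (fun z => phase z = phase θ + (m + 1) ∧ parent^[m + 1] z = θ),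
        parent z ∈ Finset.univ.filter (fun u => phase u = phase θ + m ∧ parent^[m] u = θ) := by
      intro z hz
      simp only [Finset.mem_filter, Finset.mem_univ, true_and] at hz ⊢
      have h2 : 2 ≤ phase z := by have := (hphase θ).1; omega
      have hpz := hparent z h2
      refine ⟨by omega, ?_⟩
      rw [← Function.iterate_succ_apply]
      exact hz.2
    rw [← Finset.sum_fiberwise_of_maps_to hmaps π]
    have hinner : ∀ u ∈ Finset.univ.filter (fun u => phase u = phase θ + m ∧ parent^[m] u = θ),
        ∑ z ∈ (Finset.univ.filter
          (fun z => phase z = phase θ + (m + 1) ∧ parent^[m + 1] z = θ)).filter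
          (fun z => parent z = u), π z = π u := by
      intro u hu
      simp only [Finset.mem_filter, Finset.mem_univ, true_and] at hu
      have hset : (Finset.univ.filter
          (fun z => phase z = phase θ + (m + 1) ∧ parent^[m + 1] z = θ)).filter
          (fun z => parent z = u)
          = Finset.univ.filter (fun z => parent z = u ∧ phase z = phase u + 1) := by
        ext z
        simp only [Finset.mem_filter, Finset.mem_univ, true_and]
        constructor
        · rintro ⟨⟨h1, h2⟩, h3⟩; exact ⟨h3, by omega⟩
        · rintro ⟨h1, h2⟩
          refine ⟨⟨by omega, ?_⟩, h1⟩
          rw [Function.iterate_succ_apply, h1, hu.2]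
      rw [hset]
      have hval : ∀ z ∈ Finset.univ.filter (fun z => parent z = u ∧ phase z = phase u + 1),
          π z = π u / (M (phase u + 1) : ℝ) := by
        intro z hz
        simp only [Finset.mem_filter, Finset.mem_univ, true_and] at hz
        have h2 : 2 ≤ phase z := by have := (hphase u).1; omega
        rw [hπrec z h2, hz.1, hz.2]
      rw [Finset.sum_congr rfl hval, Finset.sum_const, hfiber u (by omega), nsmul_eq_mul]
      have hMne : (M (phase u + 1) : ℝ) ≠ 0 := by
        have := hM (phase u + 1); positivity
      field_simp
    rw [Finset.sum_congr rfl hinner]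
    exact ih θ (by omega)

end Helpers

section Paoi
variable {V : Type*} [Fintype V]
variable (phase : V → ℕ) (parent : V → V) (π W : V → ℝ) (Γ : ℕ) (Ψ : ℕ → Finset (Finset V))

lemma paoi_refl : ∀ k (ψ : Finset V), paoiAux phase parent π W Γ Ψ k ψ ψ := by
  intro k ψ
  cases k with
  | zero => simp only [paoiAux]
  | succ k => simp only [paoiAux]; exact fun _ _ => trivial

lemma paoi_symm : ∀ k (ψ ψ' : Finset V), paoiAux phase parent π W Γ Ψ k ψ ψ' →
    paoiAux phase parent π W Γ Ψ k ψ' ψ := by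
  intro k ψ ψ' h
  cases k with
  | zero => simp only [paoiAux] at h ⊢; exact h.symm
  | succ k => simp only [paoiAux] at h ⊢; exact fun ψ₀ h₀ => (h ψ₀ h₀).symm

lemma paoi_trans : ∀ k (ψ ψ' ψ'' : Finset V), paoiAux phase parent π W Γ Ψ k ψ ψ' →
    paoiAux phase parent π W Γ Ψ k ψ' ψ'' → paoiAux phase parent π W Γ Ψ k ψ ψ'' := by
  intro k ψ ψ' ψ'' h h'
  cases k with
  | zero => simp only [paoiAux] at h h' ⊢; exact h.trans h'
  | succ k => simp only [paoiAux] at h h' ⊢; exact fun ψ₀ h₀ => (h ψ₀ h₀).trans (h' ψ₀ h₀)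

end Paoi

set_option maxHeartbeats 1000000 in
/-- In a uniform signal tree with infoset partitions satisfying
perfect recall, any two PAOI-equivalent infosets of the same phase have equal win
rate.  (Abstract core of Proposition 1: PAOI is a resolution bound of EHS.) -/
theorem paoi_equivalent_infosets_have_equal_winrate
    {V : Type*} [Fintype V]
    (Γ : ℕ) (hΓ : 1 ≤ Γ)
    (phase : V → ℕ)
    (hphase : ∀ v, 1 ≤ phase v ∧ phase v ≤ Γ)
    (hphase_surj : ∀ r, 1 ≤ r → r ≤ Γ → ∃ v, phase v = r)
    (parent : V → V)
    (hparent : ∀ v, 2 ≤ phase v → phase (parent v) + 1 = phase v)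
    (M : ℕ → ℕ) (hM : ∀ r, 1 ≤ M r)
    (hfiber : ∀ v, phase v < Γ →
      (Finset.univ.filter (fun v' => parent v' = v ∧ phase v' = phase v + 1)).card
        = M (phase v + 1))
    (π : V → ℝ)
    (hπ1 : ∀ v, phase v = 1 → 0 < π v)
    (hπrec : ∀ v, 2 ≤ phase v → π v = π (parent v) / (M (phase v) : ℝ))
    (Ψ : ℕ → Finset (Finset V))
    (hΨne : ∀ r, ∀ ψ ∈ Ψ r, ψ.Nonempty)
    (hΨphase : ∀ r, ∀ ψ ∈ Ψ r, ∀ v ∈ ψ, phase v = r)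
    (hΨcover : ∀ r, 1 ≤ r → r ≤ Γ → ∀ v, phase v = r → ∃! ψ, ψ ∈ Ψ r ∧ v ∈ ψ)
    (hrecall : ∀ r, 1 ≤ r → r < Γ → ∀ ψ ∈ Ψ r, ∀ ψ' ∈ Ψ (r + 1),
      (∃ v ∈ ψ', parent v ∈ ψ) → ∀ v ∈ ψ', parent v ∈ ψ)
    (W : V → ℝ) :
    ∀ r, 1 ≤ r → r ≤ Γ → ∀ ψ ∈ Ψ r, ∀ ψ' ∈ Ψ r,
      paoiAux phase parent π W Γ Ψ (Γ - r) ψ ψ' →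
      winRate phase parent π W Γ r ψ = winRate phase parent π W Γ r ψ' := by
  have hπpos : ∀ v, 0 < π v := pi_pos Γ phase parent M hM hphase hparent π hπ1 hπrec
  have hdisj : ∀ r, 1 ≤ r → r ≤ Γ → ∀ ψ₁ ∈ Ψ r, ∀ ψ₂ ∈ Ψ r, ∀ v,
      v ∈ ψ₁ → v ∈ ψ₂ → ψ₁ = ψ₂ := by
    intro r h1 h2 ψ₁ hψ₁ ψ₂ hψ₂ v hv1 hv2
    obtain ⟨ψu, _, hu⟩ := hΨcover r h1 h2 v (hΨphase r ψ₁ hψ₁ v hv1)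
    exact (hu ψ₁ ⟨hψ₁, hv1⟩).trans (hu ψ₂ ⟨hψ₂, hv2⟩).symm
  have hsum_fiber : ∀ (m : ℕ) (S : Finset V) (f : V → ℝ),
      ∑ z ∈ Finset.univ.filter (fun z => phase z = Γ ∧ parent^[m] z ∈ S), f z
        = ∑ θ ∈ S, ∑ z ∈ Finset.univ.filter (fun z => phase z = Γ ∧ parent^[m] z = θ), f z := by
    intro m S f
    rw [← Finset.sum_fiberwise_of_maps_to (g := parent^[m]) (t := S)
      (fun z hz => (Finset.mem_filter.mp hz).2.2) f]
    refine Finset.sum_congr rfl fun θ hθ => ?_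
    congr 1
    ext z
    simp only [Finset.mem_filter, Finset.mem_univ, true_and]
    constructor
    · rintro ⟨⟨hp1, _⟩, h2⟩; exact ⟨hp1, h2⟩
    · rintro ⟨hp1, h2⟩; exact ⟨⟨hp1, h2 ▸ hθ⟩, h2⟩
  have hdw : ∀ r, r ≤ Γ → ∀ θ : V, phase θ = r →
      ∑ z ∈ Finset.univ.filter (fun z => phase z = Γ ∧ parent^[Γ - r] z = θ), π z = π θ := by
    intro r hr θ hθ
    have h := desc_weight Γ phase parent M hM hphase hparent hfiber π hπrec (Γ - r) θ
      (by omega)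
    have e : phase θ + (Γ - r) = Γ := by omega
    rw [e] at h
    exact h
  have hden : ∀ r, r ≤ Γ → ∀ ψ : Finset V, (∀ v ∈ ψ, phase v = r) →
      ∑ z ∈ Finset.univ.filter (fun z => phase z = Γ ∧ parent^[Γ - r] z ∈ ψ), π z
        = ∑ θ ∈ ψ, π θ := by
    intro r hr ψ hψp
    rw [hsum_fiber (Γ - r) ψ π]
    exact Finset.sum_congr rfl fun θ hθ => hdw r hr θ (hψp θ hθ)
  have hdenpos : ∀ r, r ≤ Γ → ∀ ψ : Finset V, ψ.Nonempty → (∀ v ∈ ψ, phase v = r) →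
      0 < ∑ z ∈ Finset.univ.filter (fun z => phase z = Γ ∧ parent^[Γ - r] z ∈ ψ), π z := by
    intro r hr ψ hne hψp
    rw [hden r hr ψ hψp]
    exact Finset.sum_pos (fun v _ => hπpos v) hne
  have hshift : ∀ r, r + 1 ≤ Γ → ∀ ψ : Finset V,
      Finset.univ.filter (fun z => phase z = Γ ∧ parent^[Γ - r] z ∈ ψ)
        = Finset.univ.filter (fun z => phase z = Γ ∧ parent^[Γ - (r + 1)] z ∈
            Finset.univ.filter (fun u => phase u = r + 1 ∧ parent u ∈ ψ)) := by
    intro r hr ψ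
    ext z
    simp only [Finset.mem_filter, Finset.mem_univ, true_and]
    constructor
    · rintro ⟨hz, hm⟩
      have hphiter := phase_iter phase parent hparent (Γ - (r + 1)) z (by omega)
      refine ⟨hz, by omega, ?_⟩
      have e : Γ - r = Γ - (r + 1) + 1 := by omega
      rw [e, Function.iterate_succ_apply'] at hm
      exact hm
    · rintro ⟨hz, _, h2⟩
      refine ⟨hz, ?_⟩
      have e : Γ - r = (Γ - (r + 1)) + 1 := by omega
      rw [e, Function.iterate_succ_apply']
      exact h2
  have hpart : ∀ r, 1 ≤ r → r + 1 ≤ Γ → ∀ ψ ∈ Ψ r, ∀ h : V → ℝ,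
      ∑ u ∈ Finset.univ.filter (fun u => phase u = r + 1 ∧ parent u ∈ ψ), h u
        = ∑ ψ₁ ∈ (Ψ (r + 1)).filter (fun ψ₁ => ∃ v ∈ ψ₁, parent v ∈ ψ), ∑ u ∈ ψ₁, h u := by
    intro r hr1 hrΓ ψ hψ h
    have hd : Set.PairwiseDisjoint
        (↑((Ψ (r + 1)).filter (fun ψ₁ => ∃ v ∈ ψ₁, parent v ∈ ψ)))
        (id : Finset V → Finset V) := by
      intro a ha b hb hab
      simp only [Finset.coe_filter, Set.mem_setOf_eq] at ha hb
      exact Finset.disjoint_left.mpr fun v hva hvb =>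
        hab (hdisj (r + 1) (by omega) hrΓ a ha.1 b hb.1 v hva hvb)
    have hb : Finset.univ.filter (fun u => phase u = r + 1 ∧ parent u ∈ ψ)
        = ((Ψ (r + 1)).filter (fun ψ₁ => ∃ v ∈ ψ₁, parent v ∈ ψ)).biUnion id := by
      ext u
      simp only [Finset.mem_biUnion, Finset.mem_filter, Finset.mem_univ, true_and, id_eq]
      constructor
      · rintro ⟨hu1, hu2⟩
        obtain ⟨ψ₁, ⟨hψ₁, huψ₁⟩, _⟩ := hΨcover (r + 1) (by omega) hrΓ u hu1
        exact ⟨ψ₁, ⟨hψ₁, ⟨u, huψ₁, hu2⟩⟩, huψ₁⟩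
      · rintro ⟨ψ₁, ⟨hψ₁, v, hv, hpv⟩, huψ₁⟩
        exact ⟨hΨphase (r + 1) ψ₁ hψ₁ u huψ₁,
          hrecall r hr1 (by omega) ψ hψ ψ₁ hψ₁ ⟨v, hv, hpv⟩ u huψ₁⟩
    rw [hb, Finset.sum_biUnion hd]
    rfl
  have hsplit : ∀ r, 1 ≤ r → r + 1 ≤ Γ → ∀ ψ ∈ Ψ r, ∀ f : V → ℝ,
      ∑ z ∈ Finset.univ.filter (fun z => phase z = Γ ∧ parent^[Γ - r] z ∈ ψ), f z
        = ∑ ψ₁ ∈ (Ψ (r + 1)).filter (fun ψ₁ => ∃ v ∈ ψ₁, parent v ∈ ψ),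
            ∑ z ∈ Finset.univ.filter
              (fun z => phase z = Γ ∧ parent^[Γ - (r + 1)] z ∈ ψ₁), f z := by
    intro r hr1 hrΓ ψ hψ f
    rw [hshift r hrΓ ψ, hsum_fiber (Γ - (r + 1)) _ f, hpart r hr1 hrΓ ψ hψ]
    apply Finset.sum_congr rfl
    intro ψ₁ _
    rw [hsum_fiber (Γ - (r + 1)) ψ₁ f]
  suffices H : ∀ k r, r + k = Γ → 1 ≤ r → ∀ ψ ∈ Ψ r, ∀ ψ' ∈ Ψ r,
      paoiAux phase parent π W Γ Ψ k ψ ψ' →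
      winRate phase parent π W Γ r ψ = winRate phase parent π W Γ r ψ' by
    intro r h1 h2 ψ hψ ψ' hψ' hp
    exact H (Γ - r) r (by omega) h1 ψ hψ ψ' hψ' hp
  intro k
  induction k with
  | zero =>
    intro r hrΓ _ ψ _ ψ' _ hp
    have : r = Γ := by omega
    subst this
    simpa only [paoiAux] using hp
  | succ k ih =>
    intro r hrΓ hr1 ψ hψ ψ' hψ' hp
    simp only [paoiAux] at hp
    have e1 : Γ - k = r + 1 := by omega
    have e2 : Γ - (k + 1) = r := by omega
    rw [e1, e2] at hp
    have key : ∀ ψa ∈ Ψ r, winRate phase parent π W Γ r ψa =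
        ∑ ψ₀ ∈ Ψ (r + 1),
          (((Ψ (r + 1)).filter
              (fun ψ₂ => paoiAux phase parent π W Γ Ψ k ψ₂ ψ₀)).card : ℝ)⁻¹ *
            childFrac phase parent π r ψa
              (Finset.univ.filter (fun θ' =>
                ∃ ψ₁ ∈ Ψ (r + 1), θ' ∈ ψ₁ ∧ paoiAux phase parent π W Γ Ψ k ψ₁ ψ₀)) *
            winRate phase parent π W Γ (r + 1) ψ₀ := by
      intro ψa hψa
      have hrΓ1 : r + 1 ≤ Γ := by omega
      have hne := hΨne r ψa hψa
      have hphasea := hΨphase r ψa hψa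
      have hDapos : 0 < ∑ z ∈ Finset.univ.filter
          (fun z => phase z = Γ ∧ parent^[Γ - r] z ∈ ψa), π z :=
        hdenpos r (by omega) ψa hne hphasea
      have hDane : (∑ z ∈ Finset.univ.filter
          (fun z => phase z = Γ ∧ parent^[Γ - r] z ∈ ψa), π z) ≠ 0 := ne_of_gt hDapos
      -- childFrac denominator equals the phase-Γ denominator of ψa
      have hcfden : (∑ θ' ∈ Finset.univ.filter
            (fun θ' => phase θ' = r + 1 ∧ parent θ' ∈ ψa), π θ')
          = ∑ z ∈ Finset.univ.filter
              (fun z => phase z = Γ ∧ parent^[Γ - r] z ∈ ψa), π z := by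
        rw [hpart r hr1 hrΓ1 ψa hψa π, hsplit r hr1 hrΓ1 ψa hψa π]
        refine Finset.sum_congr rfl fun ψ₁ hψ₁ => ?_
        rw [Finset.mem_filter] at hψ₁
        exact (hden (r + 1) hrΓ1 ψ₁ (hΨphase (r + 1) ψ₁ hψ₁.1)).symm
      -- each summand
      have hsummand : ∀ ψ₀ ∈ Ψ (r + 1),
          (((Ψ (r + 1)).filter
              (fun ψ₂ => paoiAux phase parent π W Γ Ψ k ψ₂ ψ₀)).card : ℝ)⁻¹ *
            childFrac phase parent π r ψa
              (Finset.univ.filter (fun θ' =>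
                ∃ ψ₁ ∈ Ψ (r + 1), θ' ∈ ψ₁ ∧ paoiAux phase parent π W Γ Ψ k ψ₁ ψ₀)) *
            winRate phase parent π W Γ (r + 1) ψ₀
          = (∑ ψ₁ ∈ (Ψ (r + 1)).filter (fun ψ₁ => ∃ v ∈ ψ₁, parent v ∈ ψa),
              if paoiAux phase parent π W Γ Ψ k ψ₁ ψ₀ then
                (((Ψ (r + 1)).filter
                    (fun ψ₂ => paoiAux phase parent π W Γ Ψ k ψ₂ ψ₀)).card : ℝ)⁻¹ *
                  (∑ θ ∈ ψ₁, π θ) * winRate phase parent π W Γ (r + 1) ψ₀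
              else 0)
            / (∑ z ∈ Finset.univ.filter
                (fun z => phase z = Γ ∧ parent^[Γ - r] z ∈ ψa), π z) := by
        intro ψ₀ hψ₀
        have hnum : (∑ θ' ∈ Finset.univ.filter
              (fun θ' => phase θ' = r + 1 ∧ parent θ' ∈ ψa ∧ θ' ∈
                Finset.univ.filter (fun t =>
                  ∃ ψ₁ ∈ Ψ (r + 1), t ∈ ψ₁ ∧ paoiAux phase parent π W Γ Ψ k ψ₁ ψ₀)), π θ')
            = ∑ ψ₁ ∈ (Ψ (r + 1)).filter (fun ψ₁ => ∃ v ∈ ψ₁, parent v ∈ ψa),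
                if paoiAux phase parent π W Γ Ψ k ψ₁ ψ₀ then ∑ θ ∈ ψ₁, π θ else 0 := by
          have e : Finset.univ.filter
              (fun θ' => phase θ' = r + 1 ∧ parent θ' ∈ ψa ∧ θ' ∈
                Finset.univ.filter (fun t =>
                  ∃ ψ₁ ∈ Ψ (r + 1), t ∈ ψ₁ ∧ paoiAux phase parent π W Γ Ψ k ψ₁ ψ₀))
              = (Finset.univ.filter (fun θ' => phase θ' = r + 1 ∧ parent θ' ∈ ψa)).filter
                  (fun θ' => θ' ∈ Finset.univ.filter (fun t =>
                    ∃ ψ₁ ∈ Ψ (r + 1), t ∈ ψ₁ ∧ paoiAux phase parent π W Γ Ψ k ψ₁ ψ₀)) := by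
            ext x
            simp only [Finset.mem_filter, Finset.mem_univ, true_and]
            tauto
          rw [e, Finset.sum_filter, hpart r hr1 hrΓ1 ψa hψa]
          refine Finset.sum_congr rfl fun ψ₁ hψ₁ => ?_
          rw [Finset.mem_filter] at hψ₁
          by_cases hpa : paoiAux phase parent π W Γ Ψ k ψ₁ ψ₀
          · rw [if_pos hpa]
            refine Finset.sum_congr rfl fun u hu => ?_
            rw [if_pos]
            simp only [Finset.mem_filter, Finset.mem_univ, true_and]
            exact ⟨ψ₁, hψ₁.1, hu, hpa⟩
          · rw [if_neg hpa]
            refine Finset.sum_eq_zero fun u hu => ?_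
            rw [if_neg]
            simp only [Finset.mem_filter, Finset.mem_univ, true_and]
            rintro ⟨ψ₂, hψ₂, huψ₂, hp₂⟩
            have he : ψ₁ = ψ₂ := hdisj (r + 1) (by omega) hrΓ1 ψ₁ hψ₁.1 ψ₂ hψ₂ u hu huψ₂
            exact hpa (he ▸ hp₂)
        have hcf : childFrac phase parent π r ψa
            (Finset.univ.filter (fun θ' =>
              ∃ ψ₁ ∈ Ψ (r + 1), θ' ∈ ψ₁ ∧ paoiAux phase parent π W Γ Ψ k ψ₁ ψ₀))
            = (∑ ψ₁ ∈ (Ψ (r + 1)).filter (fun ψ₁ => ∃ v ∈ ψ₁, parent v ∈ ψa),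
                if paoiAux phase parent π W Γ Ψ k ψ₁ ψ₀ then ∑ θ ∈ ψ₁, π θ else 0)
              / (∑ z ∈ Finset.univ.filter
                  (fun z => phase z = Γ ∧ parent^[Γ - r] z ∈ ψa), π z) := by
          rw [childFrac, ← hnum, ← hcfden]
        rw [hcf, Finset.sum_div, Finset.mul_sum, Finset.sum_mul, Finset.sum_div]
        refine Finset.sum_congr rfl fun ψ₁ hψ₁ => ?_
        by_cases hpa : paoiAux phase parent π W Γ Ψ k ψ₁ ψ₀
        · rw [if_pos hpa, if_pos hpa]
          ring
        · rw [if_neg hpa, if_neg hpa]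
          ring
      rw [Finset.sum_congr rfl hsummand, ← Finset.sum_div, Finset.sum_comm]
      -- inner sums
      have hinner : ∀ ψ₁ ∈ (Ψ (r + 1)).filter (fun ψ₁ => ∃ v ∈ ψ₁, parent v ∈ ψa),
          (∑ ψ₀ ∈ Ψ (r + 1),
            if paoiAux phase parent π W Γ Ψ k ψ₁ ψ₀ then
              (((Ψ (r + 1)).filter
                  (fun ψ₂ => paoiAux phase parent π W Γ Ψ k ψ₂ ψ₀)).card : ℝ)⁻¹ *
                (∑ θ ∈ ψ₁, π θ) * winRate phase parent π W Γ (r + 1) ψ₀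
            else 0)
          = ∑ z ∈ Finset.univ.filter
              (fun z => phase z = Γ ∧ parent^[Γ - (r + 1)] z ∈ ψ₁), π z * W z := by
        intro ψ₁ hψ₁
        rw [Finset.mem_filter] at hψ₁
        have hψ₁m := hψ₁.1
        have hPpos : 0 < ∑ θ ∈ ψ₁, π θ :=
          Finset.sum_pos (fun v _ => hπpos v) (hΨne (r + 1) ψ₁ hψ₁m)
        have hterm : ∀ ψ₀ ∈ Ψ (r + 1),
            (if paoiAux phase parent π W Γ Ψ k ψ₁ ψ₀ then
              (((Ψ (r + 1)).filter
                  (fun ψ₂ => paoiAux phase parent π W Γ Ψ k ψ₂ ψ₀)).card : ℝ)⁻¹ *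
                (∑ θ ∈ ψ₁, π θ) * winRate phase parent π W Γ (r + 1) ψ₀
            else 0)
            = (if paoiAux phase parent π W Γ Ψ k ψ₁ ψ₀ then
                (((Ψ (r + 1)).filter
                    (fun ψ₂ => paoiAux phase parent π W Γ Ψ k ψ₂ ψ₁)).card : ℝ)⁻¹ *
                  (∑ θ ∈ ψ₁, π θ) * winRate phase parent π W Γ (r + 1) ψ₁
              else 0) := by
          intro ψ₀ hψ₀
          by_cases hpa : paoiAux phase parent π W Γ Ψ k ψ₁ ψ₀
          · rw [if_pos hpa, if_pos hpa]
            have hw : winRate phase parent π W Γ (r + 1) ψ₀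
                = winRate phase parent π W Γ (r + 1) ψ₁ :=
              (ih (r + 1) (by omega) (by omega) ψ₁ hψ₁m ψ₀ hψ₀ hpa).symm
            have hc : (Ψ (r + 1)).filter (fun ψ₂ => paoiAux phase parent π W Γ Ψ k ψ₂ ψ₀)
                = (Ψ (r + 1)).filter (fun ψ₂ => paoiAux phase parent π W Γ Ψ k ψ₂ ψ₁) := by
              refine Finset.filter_congr fun ψ₂ _ => ?_
              constructor
              · exact fun h2 => paoi_trans phase parent π W Γ Ψ k ψ₂ ψ₀ ψ₁ h2
                  (paoi_symm phase parent π W Γ Ψ k ψ₁ ψ₀ hpa)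
              · exact fun h2 => paoi_trans phase parent π W Γ Ψ k ψ₂ ψ₁ ψ₀ h2 hpa
            rw [hw, hc]
          · rw [if_neg hpa, if_neg hpa]
        rw [Finset.sum_congr rfl hterm, ← Finset.sum_filter]
        have hcard : (Ψ (r + 1)).filter (fun ψ₀ => paoiAux phase parent π W Γ Ψ k ψ₁ ψ₀)
            = (Ψ (r + 1)).filter (fun ψ₂ => paoiAux phase parent π W Γ Ψ k ψ₂ ψ₁) :=
          Finset.filter_congr fun ψ₂ _ =>
            ⟨paoi_symm phase parent π W Γ Ψ k ψ₁ ψ₂,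
             paoi_symm phase parent π W Γ Ψ k ψ₂ ψ₁⟩
        rw [hcard, Finset.sum_const, nsmul_eq_mul]
        have hcne : ((((Ψ (r + 1)).filter
            (fun ψ₂ => paoiAux phase parent π W Γ Ψ k ψ₂ ψ₁)).card : ℕ) : ℝ) ≠ 0 := by
          have hmem : ψ₁ ∈ (Ψ (r + 1)).filter
              (fun ψ₂ => paoiAux phase parent π W Γ Ψ k ψ₂ ψ₁) :=
            Finset.mem_filter.mpr ⟨hψ₁m, paoi_refl phase parent π W Γ Ψ k ψ₁⟩
          have hpos := Finset.card_pos.mpr ⟨ψ₁, hmem⟩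
          have : ((Ψ (r + 1)).filter
              (fun ψ₂ => paoiAux phase parent π W Γ Ψ k ψ₂ ψ₁)).card ≠ 0 := by omega
          exact_mod_cast this
        rw [show ((((Ψ (r + 1)).filter
              (fun ψ₂ => paoiAux phase parent π W Γ Ψ k ψ₂ ψ₁)).card : ℕ) : ℝ) *
            (((((Ψ (r + 1)).filter
              (fun ψ₂ => paoiAux phase parent π W Γ Ψ k ψ₂ ψ₁)).card : ℕ) : ℝ)⁻¹ *
              (∑ θ ∈ ψ₁, π θ) * winRate phase parent π W Γ (r + 1) ψ₁)
            = (∑ θ ∈ ψ₁, π θ) * winRate phase parent π W Γ (r + 1) ψ₁ from by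
          field_simp]
        rw [winRate]
        rw [hden (r + 1) hrΓ1 ψ₁ (hΨphase (r + 1) ψ₁ hψ₁m)]
        rw [mul_comm, div_mul_cancel₀ _ (ne_of_gt hPpos)]
      rw [Finset.sum_congr rfl hinner,
        ← hsplit r hr1 hrΓ1 ψa hψa (fun z => π z * W z), winRate]
    rw [key ψ hψ, key ψ' hψ']
    apply Finset.sum_congr rfl
    intro ψ₀ hψ₀
    have h := hp ψ₀ hψ₀
    have h' : childFrac phase parent π r ψ
        (Finset.univ.filter (fun θ' =>
          ∃ ψ₁ ∈ Ψ (r + 1), θ' ∈ ψ₁ ∧ paoiAux phase parent π W Γ Ψ k ψ₁ ψ₀)) =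
        childFrac phase parent π r ψ'
          (Finset.univ.filter (fun θ' =>
            ∃ ψ₁ ∈ Ψ (r + 1), θ' ∈ ψ₁ ∧ paoiAux phase parent π W Γ Ψ k ψ₁ ψ₀)) := by
      convert h using 3
    rw [h']
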